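/- In the Setup, let u ∈ U_0 and suppose σ_0, σ_1, …, σ_d ∈ 𝕂 satisfy Lⁱ Rⁱ u = σ_i u for 0 ≤ i ≤ d. Then E*_0 E_0 u = P(q⁻¹(q − q⁻¹)⁻²) u, where P(z) = ∑_{i=0}^{d} (−1)ⁱ σ_i qⁱ zⁱ / ([i]_q!)². -/

import Mathlib

noncomputable section

/-- `[n]_q = (qⁿ − q⁻ⁿ)/(q − q⁻¹)`. -/
def qInt {K : Type*} [Field K] (q : K) (n : ℕ) : K :=
  (q ^ n - q⁻¹ ^ n) / (q - q⁻¹)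

/-- `[n]_q! = [n]_q [n−1]_q ⋯ [1]_q`. -/
def qFac {K : Type*} [Field K] (q : K) (n : ℕ) : K :=
  ∏ k ∈ Finset.range n, qInt q (k + 1)

/-- `X, Y` satisfy the cubic `q`-Serre relations. -/
def QSerre {K V : Type*} [Field K] [AddCommGroup V] [Module K V]
    (q : K) (X Y : Module.End K V) : Prop :=
  X ^ 3 * Y - qInt q 3 • (X ^ 2 * Y * X) + qInt q 3 • (X * Y * X ^ 2) - Y * X ^ 3 = 0 ∧
  Y ^ 3 * X - qInt q 3 • (Y ^ 2 * X * Y) + qInt q 3 • (Y * X * Y ^ 2) - X * Y ^ 3 = 0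

/-- `U 0, …, U d` is a decomposition of `V` with diameter `d`: the `U i` with `i ≤ d` are nonzero,
`U i = 0` for `i > d`, and `V` is the (internal) direct sum of the `U i`. -/
def IsDecomposition {K V : Type*} [Field K] [AddCommGroup V] [Module K V]
    (d : ℕ) (U : ℕ → Submodule K V) : Prop :=
  (∀ i, i ≤ d → U i ≠ ⊥) ∧ (∀ i, d < i → U i = ⊥) ∧
  (⨆ i, U i) = ⊤ ∧
  ∀ i, Disjoint (U i) (⨆ j, ⨆ _ : j ≠ i, U j)

/-- The Setup: `U 0, …, U d` is a decomposition of `V`; `R` is a raising map, `L` a lowering map,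
and `A` (resp. `As`) acts on `U i` as `R + q^{2i−d}` (resp. `L + q^{d−2i}`). -/
def TDSetup {K V : Type*} [Field K] [AddCommGroup V] [Module K V]
    (q : K) (d : ℕ) (U : ℕ → Submodule K V) (R L A As : Module.End K V) : Prop :=
  IsDecomposition d U ∧
  (∀ i, Submodule.map R (U i) ≤ U (i + 1)) ∧
  (∀ i, Submodule.map L (U (i + 1)) ≤ U i) ∧
  (∀ u ∈ U 0, L u = 0) ∧
  (∀ i, ∀ u ∈ U i, A u = R u + q ^ (2 * (i : ℤ) - d) • u) ∧
  (∀ i, ∀ u ∈ U i, As u = L u + q ^ ((d : ℤ) - 2 * (i : ℤ)) • u)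

/-- `E i` is, for each `i`, the projection onto `P i` determined by the decomposition of `V` into
the subspaces `P j`: it is the identity on `P i` and zero on each `P j` with `j ≠ i`. -/
def IsProjFamily {K V : Type*} [Field K] [AddCommGroup V] [Module K V]
    (P : ℕ → Submodule K V) (E : ℕ → Module.End K V) : Prop :=
  ∀ i, (∀ v ∈ P i, E i v = v) ∧ ∀ j, j ≠ i → ∀ v ∈ P j, E i v = 0

/-! Write `θᵢ = q^{2i-d}` and `θ*ᵢ = q^{d-2i}`. For `u ∈ U₀` the vector
`v = ∑ₘ cₘ Rᵐ u` with `cₘ = ∏_{k<m} (θ₀ - θ_{k+1})⁻¹` is a `θ₀`-eigenvector of `A`, while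
`E₀ (A - θ₀) = 0` makes `E₀` kill every `Rᵐ u` with `m ≥ 1`; hence `E₀ u = v`. Likewise
`E*₀ L = (θ*₀ - θ*ⱼ) E*₀` on `Uⱼ` turns `Lᵐ Rᵐ u = σₘ u` into
`E*₀ Rᵐ u = σₘ u / ∏_{1 ≤ k ≤ m} (θ*₀ - θ*ₖ)`, and `(θ₀ - θₖ)(θ*₀ - θ*ₖ) = -[k]_q² (q - q⁻¹)²`.
The relations `Eᵢ A = θᵢ Eᵢ` need the eigenspaces to span `V`; this follows from the same
eigenvector construction by induction along the decomposition. -/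

open Finset Module.End

lemma zpow_right_injective_of_pow_ne_one {K : Type*} [Field K] {q : K} (hq : q ≠ 0)
    (hq1 : ∀ n : ℕ, 0 < n → q ^ n ≠ 1) : Function.Injective fun n : ℤ => q ^ n := by
  have hfin : ¬IsOfFinOrder (Units.mk0 q hq) := by
    rw [isOfFinOrder_iff_pow_eq_one]
    rintro ⟨n, hn, h⟩
    exact hq1 n hn (by simpa [Units.ext_iff] using h)
  intro a b hab
  exact injective_zpow_iff_not_isOfFinOrder.mpr hfin (Units.ext (by simpa using hab))

section String

variable {K V : Type*} [Field K] [AddCommGroup V] [Module K V]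

/-- If `B` acts on the string `x, N x, N² x, …` as `N` plus the scalars `φ 0, φ 1, …`, this is
the `φ 0`-eigenvector of `B` with leading term `x`. -/
def stringEigenvector (N : Module.End K V) (φ : ℕ → K) (M : ℕ) (x : V) : V :=
  ∑ m ∈ range (M + 1), (∏ k ∈ range m, (φ 0 - φ (k + 1))⁻¹) • (N ^ m) x

lemma stringEigenvector_eq_add (N : Module.End K V) (φ : ℕ → K) (M : ℕ) (x : V) :
    stringEigenvector N φ M x =
      x + ∑ m ∈ range M, (∏ k ∈ range (m + 1), (φ 0 - φ (k + 1))⁻¹) • (N ^ (m + 1)) x := by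
  rw [stringEigenvector, sum_range_succ', add_comm]
  simp

variable {B N : Module.End K V} {φ : ℕ → K} {M : ℕ} {x : V}

lemma stringEigenvector_mem_eigenspace
    (hB : ∀ m ≤ M, B ((N ^ m) x) = (N ^ (m + 1)) x + φ m • (N ^ m) x)
    (htop : (N ^ (M + 1)) x = 0) (hφ : ∀ m, 1 ≤ m → m ≤ M → φ 0 ≠ φ m) :
    stringEigenvector N φ M x ∈ eigenspace B (φ 0) := by
  set c : ℕ → K := fun m => ∏ k ∈ range m, (φ 0 - φ (k + 1))⁻¹
  have hc : ∀ m < M, (φ 0 - φ (m + 1)) * c (m + 1) = c m := fun m hm => by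
    rw [show c (m + 1) = c m * (φ 0 - φ (m + 1))⁻¹ from prod_range_succ _ _,
      mul_left_comm, mul_inv_cancel₀ (sub_ne_zero.mpr (hφ (m + 1) (by omega) hm)), mul_one]
  have hshift : ∑ m ∈ range (M + 1), c m • (N ^ (m + 1)) x =
      ∑ m ∈ range (M + 1), ((φ 0 - φ m) * c m) • (N ^ m) x := by
    rw [sum_range_succ, htop, smul_zero, add_zero, sum_range_succ']
    simp only [sub_self, zero_mul, zero_smul, add_zero]
    exact sum_congr rfl fun m hm => by rw [hc m (mem_range.mp hm)]
  rw [mem_eigenspace_iff, stringEigenvector, map_sum, smul_sum]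
  calc ∑ m ∈ range (M + 1), B (c m • (N ^ m) x)
      = ∑ m ∈ range (M + 1), (c m • (N ^ (m + 1)) x + (c m * φ m) • (N ^ m) x) :=
        sum_congr rfl fun m hm => by
          rw [map_smul, hB m (Nat.lt_succ_iff.mp (mem_range.mp hm)), smul_add, smul_smul]
    _ = ∑ m ∈ range (M + 1), φ 0 • c m • (N ^ m) x := by
        rw [sum_add_distrib, hshift, ← sum_add_distrib]
        exact sum_congr rfl fun m _ => by rw [smul_smul, ← add_smul]; ring_nf

lemma mem_of_stringEigenvector {S : Submodule K V}
    (hB : ∀ m ≤ M, B ((N ^ m) x) = (N ^ (m + 1)) x + φ m • (N ^ m) x)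
    (htop : (N ^ (M + 1)) x = 0) (hφ : ∀ m, 1 ≤ m → m ≤ M → φ 0 ≠ φ m)
    (hS : eigenspace B (φ 0) ≤ S) (hN : ∀ m < M, (N ^ (m + 1)) x ∈ S) : x ∈ S := by
  have hv := hS (stringEigenvector_mem_eigenspace hB htop hφ)
  rw [stringEigenvector_eq_add] at hv
  have hrest := S.sum_mem fun m hm => S.smul_mem
    (∏ k ∈ range (m + 1), (φ 0 - φ (k + 1))⁻¹) (hN m (mem_range.mp hm))
  simpa using S.sub_mem hv hrest

lemma apply_pow_apply_of_string {E : Module.End K V} {θ : K} (hE : ∀ y, E (B y) = θ • E y)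
    {n : ℕ} (hB : ∀ m < n, B ((N ^ m) x) = (N ^ (m + 1)) x + φ m • (N ^ m) x) :
    E ((N ^ n) x) = (∏ k ∈ range n, (θ - φ k)) • E x := by
  induction n with
  | zero => simp
  | succ n ih =>
    have h := hE ((N ^ n) x)
    rw [hB n n.lt_succ_self, map_add, map_smul, ih fun m hm => hB m (by omega)] at h
    rw [prod_range_succ, mul_comm, ← smul_smul, sub_smul, ← h, add_sub_cancel_right]

end String

lemma IsProjFamily.apply_apply_eq_smul {K V : Type*} [Field K] [AddCommGroup V] [Module K V]
    {B : Module.End K V} {θ : ℕ → K} {E : ℕ → Module.End K V}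
    (hE : IsProjFamily (fun i => eigenspace B (θ i)) E) (hspan : ⨆ i, eigenspace B (θ i) = ⊤)
    (i : ℕ) (x : V) : E i (B x) = θ i • E i x := by
  have hx : x ∈ ⨆ j, eigenspace B (θ j) := hspan ▸ Submodule.mem_top
  refine Submodule.iSup_induction _ (motive := fun y => E i (B y) = θ i • E i y) hx
    (fun j y hy => ?_) (by simp) fun y z hy hz => by
      rw [map_add, map_add, map_add, hy, hz, smul_add]
  rw [mem_eigenspace_iff.mp hy, map_smul]
  rcases eq_or_ne j i with rfl | hji
  · rfl
  · rw [(hE i).2 j hji y hy, smul_zero, smul_zero]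

section Scalars

variable {K : Type*} [Field K] {q : K}

lemma eigenvalue_gap_mul (hq : q ≠ 0) (hq2 : q - q⁻¹ ≠ 0) (d n : ℕ) :
    (q ^ (2 * ((0 : ℕ) : ℤ) - d) - q ^ (2 * (n : ℤ) - d)) *
      (q ^ ((d : ℤ) - 2 * ((0 : ℕ) : ℤ)) - q ^ ((d : ℤ) - 2 * (n : ℤ))) =
      -qInt q n ^ 2 * (q - q⁻¹) ^ 2 := by
  rw [qInt, div_pow, neg_mul, div_mul_cancel₀ _ (pow_ne_zero 2 hq2)]
  simp only [Nat.cast_zero, mul_zero, zero_sub, sub_zero, zpow_sub₀ hq, zpow_neg, zpow_mul,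
    zpow_natCast, zpow_ofNat, inv_pow]
  field_simp
  ring

lemma prod_eigenvalue_gap_mul (hq : q ≠ 0) (hq2 : q - q⁻¹ ≠ 0) (d m : ℕ) :
    (∏ k ∈ range m, (q ^ (2 * ((0 : ℕ) : ℤ) - d) - q ^ (2 * ((k + 1 : ℕ) : ℤ) - d))) *
      ∏ k ∈ range m, (q ^ ((d : ℤ) - 2 * ((0 : ℕ) : ℤ)) - q ^ ((d : ℤ) - 2 * ((k + 1 : ℕ) : ℤ))) =
      (-1) ^ m * qFac q m ^ 2 * ((q - q⁻¹) ^ 2) ^ m := by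
  rw [← prod_mul_distrib, prod_congr rfl fun k _ => eigenvalue_gap_mul hq hq2 d (k + 1), qFac]
  simp only [neg_mul, prod_neg, prod_mul_distrib, prod_pow, prod_const, card_range]
  rw [pow_right_comm _ m 2, mul_assoc]

end Scalars

namespace TDSetup

variable {K V : Type*} [Field K] [AddCommGroup V] [Module K V] {q : K} {d : ℕ}
  {U : ℕ → Submodule K V} {R L A As : Module.End K V} {u : V}

lemma pow_R_mem (h : TDSetup q d U R L A As) {j : ℕ} {x : V} (hx : x ∈ U j) (m : ℕ) :
    (R ^ m) x ∈ U (j + m) := by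
  induction m with
  | zero => simpa using hx
  | succ m ih => rw [pow_succ', Module.End.mul_apply]; exact h.2.1 (j + m) ⟨_, ih, rfl⟩

lemma pow_L_mem (h : TDSetup q d U R L A As) {j : ℕ} {x : V} (m : ℕ) (hx : x ∈ U (j + m)) :
    (L ^ m) x ∈ U j := by
  induction m generalizing x with
  | zero => simpa using hx
  | succ m ih =>
    rw [pow_succ, Module.End.mul_apply]
    exact ih (h.2.2.1 (j + m) ⟨x, by rwa [← add_assoc] at hx, rfl⟩)

lemma eq_zero_of_lt (h : TDSetup q d U R L A As) {j : ℕ} {x : V} (hj : d < j) (hx : x ∈ U j) :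
    x = 0 := by
  rwa [h.1.2.1 j hj, Submodule.mem_bot] at hx

lemma A_pow_R (h : TDSetup q d U R L A As) {j : ℕ} {x : V} (hx : x ∈ U j) (m : ℕ) :
    A ((R ^ m) x) = (R ^ (m + 1)) x + q ^ (2 * ((j + m : ℕ) : ℤ) - d) • (R ^ m) x := by
  rw [h.2.2.2.2.1 _ _ (h.pow_R_mem hx m), pow_succ', Module.End.mul_apply]

lemma As_pow_L (h : TDSetup q d U R L A As) {j : ℕ} {x : V} (hx : x ∈ U j) {m : ℕ} (hm : m ≤ j) :
    As ((L ^ m) x) = (L ^ (m + 1)) x + q ^ ((d : ℤ) - 2 * ((j - m : ℕ) : ℤ)) • (L ^ m) x := by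
  have hLx : (L ^ m) x ∈ U (j - m) := h.pow_L_mem m (by rwa [Nat.sub_add_cancel hm])
  rw [h.2.2.2.2.2 _ _ hLx, pow_succ', Module.End.mul_apply]

lemma pow_L_succ_apply (h : TDSetup q d U R L A As) {j : ℕ} {x : V} (hx : x ∈ U j) :
    (L ^ (j + 1)) x = 0 := by
  rw [pow_succ', Module.End.mul_apply]
  exact h.2.2.2.1 _ (h.pow_L_mem j (by rwa [zero_add]))

variable (hq : Function.Injective fun n : ℤ => q ^ n)
include hq

lemma iSup_eigenspace_A (h : TDSetup q d U R L A As) :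
    ⨆ i : ℕ, eigenspace A (q ^ (2 * (i : ℤ) - d)) = ⊤ := by
  rw [eq_top_iff, ← h.1.2.2.1, iSup_le_iff]
  suffices ∀ n j, d - j = n → U j ≤ ⨆ i : ℕ, eigenspace A (q ^ (2 * (i : ℤ) - d)) from
    fun j => this _ j rfl
  intro n
  induction n using Nat.strong_induction_on with
  | _ n ih =>
  intro j hn x hx
  rcases lt_or_ge d j with hdj | hjd
  · rw [h.eq_zero_of_lt hdj hx]
    exact zero_mem _
  refine mem_of_stringEigenvector (M := d - j) (φ := fun m => q ^ (2 * ((j + m : ℕ) : ℤ) - d))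
    (fun m _ => h.A_pow_R hx m) (h.eq_zero_of_lt (by omega) (h.pow_R_mem hx _))
    (fun m hm _ he => by have := hq he; omega) (le_iSup_of_le j le_rfl)
    fun m hm => ih _ (by omega) (j + (m + 1)) rfl (h.pow_R_mem hx _)

lemma iSup_eigenspace_As (h : TDSetup q d U R L A As) :
    ⨆ i : ℕ, eigenspace As (q ^ ((d : ℤ) - 2 * (i : ℤ))) = ⊤ := by
  rw [eq_top_iff, ← h.1.2.2.1, iSup_le_iff]
  intro j
  induction j using Nat.strong_induction_on with
  | _ j ih =>
  intro x hx
  refine mem_of_stringEigenvector (M := j) (φ := fun m => q ^ ((d : ℤ) - 2 * ((j - m : ℕ) : ℤ)))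
    (fun m hm => h.As_pow_L hx hm) (h.pow_L_succ_apply hx)
    (fun m hm hmj he => by have := hq he; omega) (le_iSup_of_le j le_rfl)
    fun m hm => ih _ (by omega) <|
      h.pow_L_mem (j := j - (m + 1)) (m + 1) (by rwa [Nat.sub_add_cancel hm])

lemma E_zero_apply (h : TDSetup q d U R L A As)
    {E : ℕ → Module.End K V}
    (hE : IsProjFamily (fun i => eigenspace A (q ^ (2 * (i : ℤ) - d))) E) (hu : u ∈ U 0) :
    E 0 u = stringEigenvector R (fun m => q ^ (2 * (m : ℤ) - d)) d u := by
  have hchain : ∀ m : ℕ, A ((R ^ m) u) = (R ^ (m + 1)) u + q ^ (2 * (m : ℤ) - d) • (R ^ m) u :=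
    fun m => by simpa only [zero_add] using h.A_pow_R hu m
  have htop : (R ^ (d + 1)) u = 0 := h.eq_zero_of_lt (by omega) (h.pow_R_mem hu _)
  have hmem : stringEigenvector R (fun m : ℕ => q ^ (2 * (m : ℤ) - d)) d u ∈
      eigenspace A (q ^ (2 * ((0 : ℕ) : ℤ) - d)) :=
    stringEigenvector_mem_eigenspace (φ := fun m : ℕ => q ^ (2 * (m : ℤ) - d))
      (fun m _ => hchain m) htop fun m hm _ he => by have := hq he; omega
  -- the `k = 0` factor of the product is `θ₀ - θ₀`
  have hkill : ∀ m, E 0 ((R ^ (m + 1)) u) = 0 := fun m => by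
    rw [apply_pow_apply_of_string (hE.apply_apply_eq_smul (h.iSup_eigenspace_A hq) 0)
      fun k _ => hchain k, prod_range_succ', sub_self, mul_zero, zero_smul]
  rw [← (hE 0).1 _ hmem, stringEigenvector_eq_add]
  simp [hkill]

lemma Es_zero_apply_pow_R (h : TDSetup q d U R L A As)
    {Es : ℕ → Module.End K V}
    (hEs : IsProjFamily (fun i => eigenspace As (q ^ ((d : ℤ) - 2 * (i : ℤ)))) Es) (hu : u ∈ U 0)
    {m : ℕ} {s : K} (hs : (L ^ m) ((R ^ m) u) = s • u) :
    Es 0 ((R ^ m) u) = ((∏ k ∈ range m,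
      (q ^ ((d : ℤ) - 2 * ((0 : ℕ) : ℤ)) - q ^ ((d : ℤ) - 2 * ((k + 1 : ℕ) : ℤ))))⁻¹ * s) • u := by
  have hx : (R ^ m) u ∈ U m := by simpa only [zero_add] using h.pow_R_mem hu m
  have hEsu : Es 0 u = u := (hEs 0).1 u <| mem_eigenspace_iff.mpr <| by
    rw [h.2.2.2.2.2 0 u hu, h.2.2.2.1 u hu, zero_add]
  have hLm := apply_pow_apply_of_string (hEs.apply_apply_eq_smul (h.iSup_eigenspace_As hq) 0)
    fun k hk => h.As_pow_L hx hk.le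
  rw [hs, map_smul, hEsu, ← prod_range_reflect,
    prod_congr rfl fun j hj => by rw [show m - (m - 1 - j) = j + 1 by grind]] at hLm
  have hprod : ∏ k ∈ range m,
      (q ^ ((d : ℤ) - 2 * ((0 : ℕ) : ℤ)) - q ^ ((d : ℤ) - 2 * ((k + 1 : ℕ) : ℤ))) ≠ 0 :=
    prod_ne_zero_iff.mpr fun k _ => sub_ne_zero.mpr fun he => by have := hq he; omega
  rw [mul_smul, hLm, inv_smul_smul₀ hprod]

end TDSetup

theorem statement8_general {K : Type*} [Field K]
    (q : K) (hq : q ≠ 0) (hq1 : ∀ n : ℕ, 0 < n → q ^ n ≠ 1)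
    {V : Type*} [AddCommGroup V] [Module K V]
    (d : ℕ) (U : ℕ → Submodule K V) (R L A As : Module.End K V)
    (hsetup : TDSetup q d U R L A As)
    (E Es : ℕ → Module.End K V)
    (hE : IsProjFamily (fun i => Module.End.eigenspace A (q ^ (2 * (i : ℤ) - d))) E)
    (hEs : IsProjFamily (fun i => Module.End.eigenspace As (q ^ ((d : ℤ) - 2 * (i : ℤ)))) Es)
    (u : V) (hu : u ∈ U 0)
    (σ : ℕ → K) (hσ : ∀ i, i ≤ d → (L ^ i * R ^ i) u = σ i • u) :
    Es 0 (E 0 u) =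
      (∑ i ∈ Finset.range (d + 1),
        (-1 : K) ^ i * σ i * q ^ i * (q⁻¹ * ((q - q⁻¹) ^ 2)⁻¹) ^ i / (qFac q i) ^ 2) • u := by
  have hinj := zpow_right_injective_of_pow_ne_one hq hq1
  have hq2 : q - q⁻¹ ≠ 0 := sub_ne_zero.mpr fun he => by
    have := @hinj 1 (-1) (by simpa using he)
    omega
  rw [hsetup.E_zero_apply hinj hE hu, stringEigenvector, map_sum, sum_smul]
  refine sum_congr rfl fun m hm => ?_
  rw [map_smul, hsetup.Es_zero_apply_pow_R hinj hEs hu (hσ m (by grind)), smul_smul,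
    prod_inv_distrib, ← mul_assoc, ← mul_inv, prod_eigenvalue_gap_mul hq hq2]
  congr 1
  rw [mul_pow, ← mul_assoc, mul_assoc _ (q ^ m), ← mul_pow, mul_inv_cancel₀ hq, one_pow, mul_one,
    mul_inv, mul_inv, ← inv_pow (-1 : K), inv_neg_one, inv_pow]
  ring

/-- Theorem 8.1: for `u ∈ U 0` with `Lⁱ Rⁱ u = σ_i u` (`0 ≤ i ≤ d`), one has
`E*₀ E₀ u = P(q⁻¹(q − q⁻¹)⁻²) u` where `P(z) = ∑ (−1)ⁱ σ_i qⁱ zⁱ / ([i]_q!)²`. -/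
theorem statement8 {K : Type*} [Field K] [IsAlgClosed K] [CharZero K]
    (q : K) (hq : q ≠ 0) (hq1 : ∀ n : ℕ, 0 < n → q ^ n ≠ 1)
    {V : Type*} [AddCommGroup V] [Module K V] [FiniteDimensional K V]
    (d : ℕ) (U : ℕ → Submodule K V) (R L A As : Module.End K V)
    (hsetup : TDSetup q d U R L A As)
    (E Es : ℕ → Module.End K V)
    (hE : IsProjFamily (fun i => Module.End.eigenspace A (q ^ (2 * (i : ℤ) - d))) E)
    (hEs : IsProjFamily (fun i => Module.End.eigenspace As (q ^ ((d : ℤ) - 2 * (i : ℤ)))) Es)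
    (u : V) (hu : u ∈ U 0)
    (σ : ℕ → K) (hσ : ∀ i, i ≤ d → (L ^ i * R ^ i) u = σ i • u) :
    Es 0 (E 0 u) =
      (∑ i ∈ Finset.range (d + 1),
        (-1 : K) ^ i * σ i * q ^ i * (q⁻¹ * ((q - q⁻¹) ^ 2)⁻¹) ^ i / (qFac q i) ^ 2) • u :=
  statement8_general q hq hq1 d U R L A As hsetup E Es hE hEs u hu σ hσ
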